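/- arXiv:math/0307375 — 2 statements merged into one kernel-verified Lean document; each statement's English description precedes it below -/
import Mathlib

section
/- Let g be a real Lie algebra with a flat torsion-free connection ∇ and an integrable complex structure J with ∇J = 0 (i.e., ∇_x ∘ J = J ∘ ∇_x for all x). Then the endomorphisms J₋(x,y) = (Jx,-Jy) and K(x,y) = (y,-x) form a hypercomplex structure on the tangent algebra T_∇ g: both are integrable complex structures and J₋ ∘ K = -K ∘ J₋. -/
/-!
Write `[(x,u),(y,w)] = ([x,y], ∇_x w - ∇_y u)` and `T(a,b) = ∇_a b - ∇_b a - [a,b]` for the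
torsion. A direct expansion gives `N_{J₋}((x,u),(y,w)) = (N_J(x,y), 0)` as soon as `∇J = 0`, and
`N_K((x,u),(y,w)) = (T(x,w) + T(u,y), T(x,y) - T(u,w))`, so both vanish for an integrable `J`
and a torsion-free `∇`.
-/

/-- Nijenhuis tensor of an endomorphism `J` with respect to a bracket `br`. -/
def Nij {α : Type*} [AddCommGroup α] (br : α → α → α) (J : α → α) (x y : α) : α :=
  J (br x y) - br (J x) y - br x (J y) - J (br (J x) (J y))

namespace TangentAlgebra

variable {R g : Type*} [CommRing R] [LieRing g] [LieAlgebra R g]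

def bracket (D : g →ₗ[R] Module.End R g) (p q : g × g) : g × g :=
  (⁅p.1, q.1⁆, D p.1 q.2 - D q.1 p.2)

def torsion (D : g →ₗ[R] Module.End R g) (x y : g) : g :=
  D x y - D y x - ⁅x, y⁆

theorem nij_prodMap_neg_of_parallel (D : g →ₗ[R] Module.End R g) (J : g →ₗ[R] g)
    (hJ2 : ∀ x, J (J x) = -x) (hpar : ∀ x y : g, D x (J y) = J (D x y)) (x u y w : g) :
    Nij (bracket D) (fun p : g × g => (J p.1, -J p.2)) (x, u) (y, w) =
      (Nij (fun a b => ⁅a, b⁆) J x y, 0) := by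
  simp only [Nij, bracket, map_neg, map_sub, hpar, hJ2, Prod.mk_sub_mk, Prod.mk.injEq]
  exact ⟨trivial, by abel⟩

theorem nij_swapNeg_eq_torsion (D : g →ₗ[R] Module.End R g) (x u y w : g) :
    Nij (bracket D) (fun p : g × g => (p.2, -p.1)) (x, u) (y, w) =
      (torsion D x w + torsion D u y, torsion D x y - torsion D u w) := by
  simp only [Nij, bracket, torsion, map_neg, Prod.mk_sub_mk, Prod.mk.injEq]
  constructor <;> abel

end TangentAlgebra

open TangentAlgebra in
theorem stmt15_general {g : Type*} [LieRing g] [LieAlgebra ℝ g]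
    (D : g →ₗ[ℝ] Module.End ℝ g)
    (htf : ∀ x y : g, D x y - D y x = ⁅x, y⁆)
    (J : g →ₗ[ℝ] g) (hJ2 : ∀ x, J (J x) = -x)
    (hJint : ∀ x y : g, Nij (fun a b => ⁅a, b⁆) J x y = 0)
    (hpar : ∀ x y : g, D x (J y) = J (D x y)) :
    (∀ p : g × g, ((J (J p.1), -J (-J p.2)) : g × g) = -p) ∧
    (∀ p q : g × g,
      Nij (fun p q : g × g => (⁅p.1, q.1⁆, D p.1 q.2 - D q.1 p.2))
        (fun p : g × g => (J p.1, -J p.2)) p q = 0) ∧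
    (∀ p : g × g, ((-p.1, -p.2) : g × g) = -p) ∧
    (∀ p q : g × g,
      Nij (fun p q : g × g => (⁅p.1, q.1⁆, D p.1 q.2 - D q.1 p.2))
        (fun p : g × g => (p.2, -p.1)) p q = 0) ∧
    (∀ p : g × g,
      ((J p.2, -J (-p.1)) : g × g) = -((-J p.2 : g), -(J p.1 : g))) := by
  have torsion_eq_zero : ∀ x y, torsion D x y = 0 := fun x y => sub_eq_zero.mpr (htf x y)
  refine ⟨fun p => by simp [hJ2, Prod.ext_iff], ?_, fun p => rfl, ?_, fun p => by simp⟩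
  · rintro ⟨x, u⟩ ⟨y, w⟩
    exact (nij_prodMap_neg_of_parallel D J hJ2 hpar x u y w).trans (by rw [hJint]; rfl)
  · rintro ⟨x, u⟩ ⟨y, w⟩
    exact (nij_swapNeg_eq_torsion D x u y w).trans (by simp [torsion_eq_zero])

/-- If `∇` is a flat torsion-free connection on `g` and `J` a `∇`-parallel integrable
complex structure, then `J₋(x,y) = (Jx,-Jy)` and `K(x,y) = (y,-x)` form a hypercomplex
structure on the tangent algebra `T_∇ g`. -/
theorem stmt15 {g : Type*} [LieRing g] [LieAlgebra ℝ g]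
    (D : g →ₗ[ℝ] Module.End ℝ g) (hflat : ∀ x y : g, D ⁅x, y⁆ = ⁅D x, D y⁆)
    (htf : ∀ x y : g, D x y - D y x = ⁅x, y⁆)
    (J : g →ₗ[ℝ] g) (hJ2 : ∀ x, J (J x) = -x)
    (hJint : ∀ x y : g, Nij (fun a b => ⁅a, b⁆) J x y = 0)
    (hpar : ∀ x y : g, D x (J y) = J (D x y)) :
    (∀ p : g × g, ((J (J p.1), -J (-J p.2)) : g × g) = -p) ∧
    (∀ p q : g × g,
      Nij (fun p q : g × g => (⁅p.1, q.1⁆, D p.1 q.2 - D q.1 p.2))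
        (fun p : g × g => (J p.1, -J p.2)) p q = 0) ∧
    (∀ p : g × g, ((-p.1, -p.2) : g × g) = -p) ∧
    (∀ p q : g × g,
      Nij (fun p q : g × g => (⁅p.1, q.1⁆, D p.1 q.2 - D q.1 p.2))
        (fun p : g × g => (p.2, -p.1)) p q = 0) ∧
    (∀ p : g × g,
      ((J p.2, -J (-p.1)) : g × g) = -((-J p.2 : g), -(J p.1 : g))) :=
  stmt15_general D htf J hJ2 hJint hpar
end

section
/- On the Lie algebra aff(ℂⁿ) = gl(n,ℂ) ⊕ ℂⁿ (viewed as a real Lie algebra) with the flat torsion-free connection ∇_{(x,v)}(y,u) = (xy, xu), the complex structure J₊(x,v) = (-x·i, iv) (where · denotes right multiplication by i ∈ ℂ acting on gl(n,ℂ) and on ℂⁿ) is parallel: ∇_{(x,v)} ∘ J₊ = J₊ ∘ ∇_{(x,v)} for all (x,v) ∈ aff(ℂⁿ). Consequently the tangent algebra T_∇ aff(ℂⁿ) carries a hypercomplex structure. -/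
/-!
On `T_∇ g = g ⊕ g` with bracket `([a,c], ∇ₐd - ∇_c b)`, every term of the Nijenhuis tensor of
`K(a,b) = (b,-a)` pairs up into a torsion `∇ₓy - ∇ᵧx - [x,y]`, so `K` is integrable as soon as `∇`
is torsion-free. For `J₋ = J ⊕ (-J)` the first component of the Nijenhuis tensor is that of `J`,
and the second cancels once `J` is `∇`-parallel with `J² = -1`. A parallel `J` is itself integrable
for a torsion-free `∇`: writing each bracket as `∇ₓy - ∇ᵧx` and moving `J` through `∇`, the eight
terms of `N_J` cancel. On `aff(ℂⁿ)`, `J₊` is parallel because `∇_{(x,v)}` is left multiplication by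
`x`, which is `ℂ`-linear.
-/
noncomputable section

/-- The real Lie algebra `aff(ℂⁿ) = gl(n,ℂ) ⊕ ℂⁿ`. -/
abbrev AffC (n : ℕ) := Matrix (Fin n) (Fin n) ℂ × (Fin n → ℂ)

/-- The flat torsion-free connection `∇_{(x,v)}(y,u) = (xy, xu)` on `aff(ℂⁿ)`. -/
def nablaC {n : ℕ} (p q : AffC n) : AffC n := (p.1 * q.1, p.1.mulVec q.2)

/-- The bracket of `aff(ℂⁿ)`: `[(x,v),(y,u)] = (xy - yx, xu - yv)`. -/
def brAffC {n : ℕ} (p q : AffC n) : AffC n :=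
  (p.1 * q.1 - q.1 * p.1, p.1.mulVec q.2 - q.1.mulVec p.2)

/-- The complex structure `J₊(x,v) = (-x·i, iv)` on `aff(ℂⁿ)` (right multiplication
by `i`). -/
def JpC {n : ℕ} (p : AffC n) : AffC n := (-(Complex.I • p.1), Complex.I • p.2)

/-- The bracket of the tangent algebra `T_∇ aff(ℂⁿ)`:
`[(a,b),(c,d)] = ([a,c], ∇ₐd - ∇_c b)`. -/
def TbrC {n : ℕ} (a b : AffC n × AffC n) : AffC n × AffC n :=
  (brAffC a.1 b.1, nablaC a.1 b.2 - nablaC b.1 a.2)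

/-- `J₋(a,b) = (J₊a, -J₊b)` on `T_∇ aff(ℂⁿ)`. -/
def JmC {n : ℕ} (a : AffC n × AffC n) : AffC n × AffC n := (JpC a.1, -JpC a.2)

/-- `K(a,b) = (b,-a)` on `T_∇ aff(ℂⁿ)`. -/
def KC {n : ℕ} (a : AffC n × AffC n) : AffC n × AffC n := (a.2, -a.1)

section TangentAlgebra

variable {V : Type*} [AddCommGroup V] (br nabla : V → V → V)

def tangentBracket (a b : V × V) : V × V := (br a.1 b.1, nabla a.1 b.2 - nabla b.1 a.2)

variable {br nabla} {J : V → V}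

theorem nij_eq_zero_of_parallel (torsion_free : ∀ x y, nabla x y - nabla y x = br x y)
    (J_sub : ∀ x y, J (x - y) = J x - J y) (J_J : ∀ x, J (J x) = -x)
    (parallel : ∀ x y, nabla x (J y) = J (nabla x y)) (x y : V) :
    Nij br J x y = 0 := by
  simp only [Nij, ← torsion_free, parallel, J_sub, J_J]
  abel

theorem nij_tangentBracket_swap_neg (torsion_free : ∀ x y, nabla x y - nabla y x = br x y)
    (nabla_neg : ∀ x y, nabla x (-y) = -nabla x y) (a b : V × V) :
    Nij (tangentBracket br nabla) (fun a => (a.2, -a.1)) a b = 0 := by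
  simp only [Nij, tangentBracket, ← torsion_free, nabla_neg, Prod.ext_iff, Prod.fst_sub,
    Prod.snd_sub, Prod.fst_zero, Prod.snd_zero]
  constructor <;> abel

theorem nij_tangentBracket_prodMap_neg (torsion_free : ∀ x y, nabla x y - nabla y x = br x y)
    (nabla_neg : ∀ x y, nabla x (-y) = -nabla x y)
    (J_sub : ∀ x y, J (x - y) = J x - J y) (J_J : ∀ x, J (J x) = -x)
    (parallel : ∀ x y, nabla x (J y) = J (nabla x y)) (a b : V × V) :
    Nij (tangentBracket br nabla) (fun a => (J a.1, -J a.2)) a b = 0 := by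
  refine Prod.ext (nij_eq_zero_of_parallel torsion_free J_sub J_J parallel a.1 b.1) ?_
  have J_neg : ∀ y, J (-y) = -J y := (AddMonoidHom.ofMapSub J J_sub).map_neg
  simp only [Nij, tangentBracket, nabla_neg, parallel, J_neg, J_sub, J_J, Prod.snd_sub,
    Prod.snd_zero]
  abel

end TangentAlgebra

section Aff

variable {n : ℕ}

theorem nablaC_sub_nablaC (p q : AffC n) : nablaC p q - nablaC q p = brAffC p q := rfl

theorem nablaC_neg (p q : AffC n) : nablaC p (-q) = -nablaC p q := by
  simp [nablaC, Matrix.mulVec_neg]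

theorem JpC_sub (p q : AffC n) : JpC (p - q) = JpC p - JpC q := by
  simp only [JpC, Prod.fst_sub, Prod.snd_sub, smul_sub, neg_sub', Prod.mk_sub_mk]

theorem JpC_neg (p : AffC n) : JpC (-p) = -JpC p := by
  simp [JpC]

theorem JpC_JpC (p : AffC n) : JpC (JpC p) = -p := by
  simp [JpC, smul_smul, Prod.ext_iff]

theorem nablaC_JpC (p q : AffC n) : nablaC p (JpC q) = JpC (nablaC p q) := by
  simp [nablaC, JpC, Matrix.mulVec_smul]

end Aff

/-- `J₊` is parallel for the flat torsion-free connection `∇` on `aff(ℂⁿ)`;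
consequently `T_∇ aff(ℂⁿ)` carries a hypercomplex structure, given by the pair
of anticommuting integrable complex structures `J₋` and `K`. -/
theorem stmt19 {n : ℕ} :
    -- ∇ J₊ = 0:
    (∀ p q : AffC n, nablaC p (JpC q) = JpC (nablaC p q)) ∧
    -- J₋ is an integrable complex structure on T_∇ aff(ℂⁿ):
    (∀ a : AffC n × AffC n, JmC (JmC a) = -a) ∧
    (∀ a b : AffC n × AffC n, Nij TbrC JmC a b = 0) ∧
    -- K is an integrable complex structure on T_∇ aff(ℂⁿ):
    (∀ a : AffC n × AffC n, KC (KC a) = -a) ∧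
    (∀ a b : AffC n × AffC n, Nij TbrC KC a b = 0) ∧
    -- J₋ and K anticommute:
    (∀ a : AffC n × AffC n, JmC (KC a) = -KC (JmC a)) := by
  refine ⟨nablaC_JpC, fun a => ?_,
    nij_tangentBracket_prodMap_neg nablaC_sub_nablaC nablaC_neg JpC_sub JpC_JpC nablaC_JpC,
    fun a => ?_, nij_tangentBracket_swap_neg nablaC_sub_nablaC nablaC_neg, fun a => ?_⟩
  · simp [JmC, JpC_JpC, JpC_neg, Prod.ext_iff]
  · simp [KC, Prod.ext_iff]
  · simp [JmC, KC, JpC_neg]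

end
end
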